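/- Poincaré-type inequality on a ball for radial functions: if f : ℝ³ → ℝ is a radial C¹ function of compact support, f(x) = g(‖x‖) with g ∈ C¹, and E = B(0,r) is the ball of radius r in ℝ³, then ∫_E |f|² dv ≤ (8r²/9) ∫_{ℝ³} ‖∇f‖² dv. -/

import Mathlib

/-!
Write `f x = h ‖x‖` with `h t = f (t • e)` for a unit vector `e`. In polar coordinates both sides
become one-dimensional integrals against `t² dt`. Integrating the identity
`(t h' + h)² = t² h'² + (t h²)'` from `s` to a point beyond the support of `h` gives
`s h(s)² ≤ ∫₀^∞ t² h'²`, hence `∫₀^r t² h² ≤ (r²/2) ∫₀^∞ t² h'²`. Since `|h'(‖x‖)| ≤ ‖Df(x)‖`,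
this is the inequality with constant `1/2 < 8/9`.
-/

open MeasureTheory Metric Set

section Hardy

variable {h : ℝ → ℝ}

theorem mul_sq_le_intervalIntegral_sq_mul_deriv_sq (hh : ContDiff ℝ 1 h) {s T : ℝ}
    (hsT : s ≤ T) (hT : h T = 0) :
    s * h s ^ 2 ≤ ∫ t in s..T, t ^ 2 * deriv h t ^ 2 := by
  have hd : ∀ t, HasDerivAt h (deriv h t) t :=
    fun t => ((hh.differentiable one_ne_zero) t).hasDerivAt
  have hderiv : Continuous (deriv h) := hh.continuous_deriv le_rfl
  have hcont : Continuous h := hh.continuous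
  have hweighted : Continuous fun t => t ^ 2 * deriv h t ^ 2 := by fun_prop
  have hprod : Continuous fun t => h t ^ 2 + 2 * t * h t * deriv h t := by fun_prop
  -- `h² + 2 t h h'` is the derivative of `t h²`, and `(t h' + h)² = t² h'² + (t h²)'`.
  have hftc : ∫ t in s..T, (h t ^ 2 + 2 * t * h t * deriv h t) = T * h T ^ 2 - s * h s ^ 2 := by
    refine intervalIntegral.integral_eq_sub_of_hasDerivAt (f := fun t => t * h t ^ 2)
      (fun t _ => ?_) (hprod.intervalIntegrable s T)
    exact ((hasDerivAt_id' t).fun_mul ((hd t).fun_pow 2)).congr_deriv (by push_cast; ring)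
  have hsplit : ∫ t in s..T, (t * deriv h t + h t) ^ 2 =
      (∫ t in s..T, t ^ 2 * deriv h t ^ 2) + ∫ t in s..T, (h t ^ 2 + 2 * t * h t * deriv h t) := by
    rw [← intervalIntegral.integral_add (hweighted.intervalIntegrable s T)
      (hprod.intervalIntegrable s T)]
    congr 1 with t
    ring
  have hnonneg : 0 ≤ ∫ t in s..T, (t * deriv h t + h t) ^ 2 :=
    intervalIntegral.integral_nonneg hsT fun t _ => sq_nonneg _
  rw [hT, zero_pow two_ne_zero, mul_zero] at hftc
  linarith

theorem mul_sq_le_integral_Ioi_sq_mul_deriv_sq (hh : ContDiff ℝ 1 h) (hc : HasCompactSupport h)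
    {s : ℝ} (hs : 0 ≤ s) :
    s * h s ^ 2 ≤ ∫ t in Ioi 0, t ^ 2 * deriv h t ^ 2 := by
  obtain ⟨B, hB⟩ := hc.isCompact.bddAbove
  have hT : h (max s (B + 1)) = 0 := image_eq_zero_of_notMem_tsupport fun hmem =>
    by linarith [hB hmem, le_max_right s (B + 1)]
  have hint : Integrable fun t => t ^ 2 * deriv h t ^ 2 :=
    (by fun_prop : Continuous _).integrable_of_hasCompactSupport
      (hc.deriv.comp_left (g := fun y => y ^ 2) (by simp)).mul_left
  calc s * h s ^ 2 ≤ ∫ t in s..max s (B + 1), t ^ 2 * deriv h t ^ 2 :=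
        mul_sq_le_intervalIntegral_sq_mul_deriv_sq hh (le_max_left _ _) hT
    _ = ∫ t in Ioc s (max s (B + 1)), t ^ 2 * deriv h t ^ 2 :=
        intervalIntegral.integral_of_le (le_max_left _ _)
    _ ≤ ∫ t in Ioi 0, t ^ 2 * deriv h t ^ 2 :=
        setIntegral_mono_set hint.integrableOn (.of_forall fun t => by positivity)
          (Ioc_subset_Ioi_self.trans (Ioi_subset_Ioi hs)).eventuallyLE

theorem integral_Ioo_sq_mul_sq_le (hh : ContDiff ℝ 1 h) (hc : HasCompactSupport h)
    {r : ℝ} (hr : 0 ≤ r) :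
    ∫ y in Ioo 0 r, y ^ 2 * h y ^ 2 ≤ r ^ 2 / 2 * ∫ t in Ioi 0, t ^ 2 * deriv h t ^ 2 := by
  set A := ∫ t in Ioi 0, t ^ 2 * deriv h t ^ 2
  have hcont : Continuous h := hh.continuous
  calc ∫ y in Ioo 0 r, y ^ 2 * h y ^ 2 = ∫ y in (0)..r, y ^ 2 * h y ^ 2 := by
        rw [intervalIntegral.integral_of_le hr, integral_Ioc_eq_integral_Ioo]
    _ ≤ ∫ y in (0)..r, A * y := by
        refine intervalIntegral.integral_mono_on hr
          ((by fun_prop : Continuous fun y => y ^ 2 * h y ^ 2).intervalIntegrable 0 r)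
          ((continuous_const.mul continuous_id).intervalIntegrable 0 r) fun y hy => ?_
        calc y ^ 2 * h y ^ 2 = y * (y * h y ^ 2) := by ring
          _ ≤ y * A := mul_le_mul_of_nonneg_left
              (mul_sq_le_integral_Ioi_sq_mul_deriv_sq hh hc hy.1) hy.1
          _ = A * y := mul_comm _ _
    _ = r ^ 2 / 2 * A := by
        rw [intervalIntegral.integral_const_mul, integral_id]
        ring

end Hardy

section Radial

variable {E : Type*} [NormedAddCommGroup E] [NormedSpace ℝ E]

theorem comp_smul_eq_of_radial {F : Type*} {f : E → F} {g : ℝ → F} (hradial : ∀ x, f x = g ‖x‖)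
    {u v : E} (hu : ‖u‖ = 1) (hv : ‖v‖ = 1) :
    (fun t : ℝ => f (t • u)) = fun t => f (t • v) := by
  funext t
  simp only [hradial, norm_smul, hu, hv]

theorem eq_norm_smul_of_radial {F : Type*} {f : E → F} {g : ℝ → F} (hradial : ∀ x, f x = g ‖x‖)
    {v : E} (hv : ‖v‖ = 1) (x : E) : f x = f (‖x‖ • v) := by
  rw [hradial, hradial, norm_smul, hv, mul_one, norm_norm]

theorem abs_deriv_comp_smul_le_norm_fderiv {f : E → ℝ} (hf : Differentiable ℝ f) {u : E}
    (hu : ‖u‖ = 1) (t : ℝ) :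
    |deriv (fun s : ℝ => f (s • u)) t| ≤ ‖fderiv ℝ f (t • u)‖ := by
  have hder : HasDerivAt (fun s : ℝ => f (s • u)) (fderiv ℝ f (t • u) u) t :=
    (hf _).hasFDerivAt.comp_hasDerivAt t
      ((hasDerivAt_id' t).smul_const u |>.congr_deriv (one_smul ℝ u))
  rw [hder.deriv, ← Real.norm_eq_abs]
  simpa [hu] using (fderiv ℝ f (t • u)).le_opNorm u

theorem abs_deriv_profile_le_norm_fderiv {f : E → ℝ} {g : ℝ → ℝ} (hf : Differentiable ℝ f)
    (hradial : ∀ x, f x = g ‖x‖) {e : E} (he : ‖e‖ = 1) (x : E) :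
    |deriv (fun t : ℝ => f (t • e)) ‖x‖| ≤ ‖fderiv ℝ f x‖ := by
  obtain ⟨u, hu, hxu⟩ : ∃ u : E, ‖u‖ = 1 ∧ ‖x‖ • u = x := by
    rcases eq_or_ne x 0 with rfl | hx
    · exact ⟨e, he, by simp⟩
    · exact ⟨‖x‖⁻¹ • x, by simp [norm_smul, hx], by simp [smul_smul, hx]⟩
  rw [← comp_smul_eq_of_radial hradial hu he]
  simpa only [hxu] using abs_deriv_comp_smul_le_norm_fderiv hf hu ‖x‖

variable [Nontrivial E] [FiniteDimensional ℝ E] [MeasurableSpace E] [BorelSpace E]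
  (μ : Measure E) [μ.IsAddHaarMeasure]

theorem setIntegral_ball_fun_norm_addHaar {F : Type*} [NormedAddCommGroup F] [NormedSpace ℝ F]
    (f : ℝ → F) (r : ℝ) :
    ∫ x in ball (0 : E) r, f ‖x‖ ∂μ = Module.finrank ℝ E • μ.real (ball 0 1) •
      ∫ y in Ioo (0 : ℝ) r, y ^ (Module.finrank ℝ E - 1) • f y := by
  have hball : (ball (0 : E) r).indicator (fun x => f ‖x‖) = fun x => (Iio r).indicator f ‖x‖ := by
    ext x
    simp only [indicator, mem_ball_zero_iff, mem_Iio]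
  have hIoo : (fun y : ℝ => y ^ (Module.finrank ℝ E - 1) • (Iio r).indicator f y) =
      (Iio r).indicator fun y => y ^ (Module.finrank ℝ E - 1) • f y := by
    ext y
    by_cases hy : y < r <;> simp [indicator, hy]
  rw [← integral_indicator measurableSet_ball, hball, integral_fun_norm_addHaar, hIoo,
    integral_indicator measurableSet_Iio, Measure.restrict_restrict measurableSet_Iio,
    Iio_inter_Ioi]

theorem setIntegral_ball_sq_eq_of_radial {f : E → ℝ} {g : ℝ → ℝ} (hradial : ∀ x, f x = g ‖x‖)
    {e : E} (he : ‖e‖ = 1) (r : ℝ) :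
    ∫ x in ball (0 : E) r, f x ^ 2 ∂μ = Module.finrank ℝ E • μ.real (ball 0 1) •
      ∫ y in Ioo (0 : ℝ) r, y ^ (Module.finrank ℝ E - 1) • f (y • e) ^ 2 := by
  have hfx : (fun x => f x ^ 2) = fun x => f (‖x‖ • e) ^ 2 :=
    funext fun x => by rw [← eq_norm_smul_of_radial hradial he x]
  rw [hfx]
  exact setIntegral_ball_fun_norm_addHaar μ (fun y => f (y • e) ^ 2) r

theorem integral_deriv_profile_sq_le_integral_norm_fderiv_sq {f : E → ℝ} {g : ℝ → ℝ}
    (hf : Differentiable ℝ f) (hradial : ∀ x, f x = g ‖x‖) {e : E} (he : ‖e‖ = 1)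
    (hint : Integrable (fun x => ‖fderiv ℝ f x‖ ^ 2) μ) :
    Module.finrank ℝ E • μ.real (ball 0 1) • ∫ y in Ioi (0 : ℝ),
        y ^ (Module.finrank ℝ E - 1) • deriv (fun t : ℝ => f (t • e)) y ^ 2
      ≤ ∫ x, ‖fderiv ℝ f x‖ ^ 2 ∂μ := by
  rw [← integral_fun_norm_addHaar μ fun y => deriv (fun t : ℝ => f (t • e)) y ^ 2]
  refine integral_mono_of_nonneg (.of_forall fun x => sq_nonneg _) hint (.of_forall fun x => ?_)
  simpa only [sq_abs] using
    pow_le_pow_left₀ (abs_nonneg _) (abs_deriv_profile_le_norm_fderiv hf hradial he x) 2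

theorem setIntegral_ball_sq_le_of_radial (hE : Module.finrank ℝ E = 3) {f : E → ℝ}
    {g : ℝ → ℝ} (hf : ContDiff ℝ 1 f) (hsupp : HasCompactSupport f)
    (hradial : ∀ x, f x = g ‖x‖) {r : ℝ} (hr : 0 ≤ r) :
    ∫ x in ball (0 : E) r, f x ^ 2 ∂μ ≤ r ^ 2 / 2 * ∫ x, ‖fderiv ℝ f x‖ ^ 2 ∂μ := by
  obtain ⟨e, he⟩ := exists_norm_eq E zero_le_one
  set h : ℝ → ℝ := fun t => f (t • e)
  have hh : ContDiff ℝ 1 h := hf.comp (contDiff_id.smul contDiff_const)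
  have hhc : HasCompactSupport h := hsupp.comp_isClosedEmbedding
    (isClosedEmbedding_smul_left (norm_ne_zero_iff.mp (he ▸ one_ne_zero)))
  have hint : Integrable (fun x => ‖fderiv ℝ f x‖ ^ 2) μ :=
    (hf.continuous_fderiv one_ne_zero).norm.pow 2 |>.integrable_of_hasCompactSupport
      ((hsupp.fderiv ℝ).mono fun x hx => by simpa using hx)
  have henergy := integral_deriv_profile_sq_le_integral_norm_fderiv_sq μ
    (hf.differentiable one_ne_zero) hradial he hint
  rw [setIntegral_ball_sq_eq_of_radial μ hradial he r]
  simp only [hE, nsmul_eq_mul, smul_eq_mul, Nat.cast_ofNat, Nat.reduceSub] at henergy ⊢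
  calc 3 * (μ.real (ball 0 1) * ∫ y in Ioo 0 r, y ^ 2 * h y ^ 2)
      ≤ 3 * (μ.real (ball 0 1) * (r ^ 2 / 2 * ∫ t in Ioi 0, t ^ 2 * deriv h t ^ 2)) := by
        gcongr
        exact integral_Ioo_sq_mul_sq_le hh hhc hr
    _ = r ^ 2 / 2 * (3 * (μ.real (ball 0 1) * ∫ t in Ioi 0, t ^ 2 * deriv h t ^ 2)) := by ring
    _ ≤ r ^ 2 / 2 * ∫ x, ‖fderiv ℝ f x‖ ^ 2 ∂μ := by gcongr

end Radial

/-- Poincaré-type inequality on a ball for radial functions in ℝ³: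
if `f` is a compactly supported `C¹` radial function, then
`∫_{B(0,r)} |f|² ≤ (8r²/9) ∫_{ℝ³} ‖∇f‖²`. -/
theorem stmt_2 (r : ℝ) (hr : 0 < r)
    (f : EuclideanSpace ℝ (Fin 3) → ℝ)
    (hf : ContDiff ℝ 1 f) (hsupp : HasCompactSupport f)
    (g : ℝ → ℝ) (hradial : ∀ x, f x = g ‖x‖) :
    ∫ x in ball (0 : EuclideanSpace ℝ (Fin 3)) r, |f x| ^ 2
      ≤ (8 * r ^ 2 / 9) * ∫ x, ‖fderiv ℝ f x‖ ^ 2 := by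
  simp_rw [sq_abs]
  calc ∫ x in ball (0 : EuclideanSpace ℝ (Fin 3)) r, f x ^ 2
      ≤ r ^ 2 / 2 * ∫ x, ‖fderiv ℝ f x‖ ^ 2 :=
        setIntegral_ball_sq_le_of_radial volume finrank_euclideanSpace_fin hf hsupp hradial hr.le
    _ ≤ 8 * r ^ 2 / 9 * ∫ x, ‖fderiv ℝ f x‖ ^ 2 :=
        mul_le_mul_of_nonneg_right (by linarith [sq_nonneg r])
          (integral_nonneg fun x => by positivity)
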